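/- If a central simple algebra A of degree n over F possesses a nonzero right ideal I of dimension n over F, then A is split: the right-multiplication map R: A → End(I*), determined by R(α)(f) = f ∘ (right multiplication by α), is an F-algebra isomorphism A ≅ End(I*) ≅ M_n(F). -/

import Mathlib

/-!
Right multiplication makes the right ideal `I` a right `A`-module, so dualizing turns it into an
`F`-algebra map `A → End_F(I*)`. Since `A` is simple and the target is nonzero, this map is
injective, and both sides have dimension `n²`, so it is an isomorphism; a basis of the
`n`-dimensional space `I*` then identifies `End_F(I*)` with `Mₙ(F)`.
-/

open Module

theorem AlgHom.bijective_of_finrank_eq {F A B : Type*} [Field F] [Ring A] [IsSimpleRing A]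
    [Ring B] [Algebra F A] [Algebra F B] [FiniteDimensional F A] (f : A →ₐ[F] B)
    (h : finrank F A = finrank F B) : Function.Bijective f := by
  have hpos : 0 < finrank F B := h ▸ finrank_pos
  have : Nontrivial B := nontrivial_of_finrank_pos hpos
  have : FiniteDimensional F B := finite_of_finrank_pos hpos
  have hinj : Function.Injective f := f.toRingHom.injective
  exact ⟨hinj, (LinearMap.injective_iff_surjective_of_finrank_eq_finrank h
    (f := f.toLinearMap)).mp hinj⟩

namespace Submodule

variable {F A : Type*} [CommSemiring F] [Semiring A] [Algebra F A]
  (I : Submodule F A) (hI : ∀ x ∈ I, ∀ a : A, x * a ∈ I)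

def rightMul : A →ₗ[F] I →ₗ[F] I :=
  LinearMap.mk₂ F (fun α x => ⟨x * α, hI x x.2 α⟩)
    (fun _ _ _ => Subtype.ext (mul_add _ _ _))
    (fun _ _ _ => Subtype.ext (mul_smul_comm _ _ _))
    (fun _ _ _ => Subtype.ext (add_mul _ _ _))
    (fun _ _ _ => Subtype.ext (smul_mul_assoc _ _ _))

@[simp]
theorem rightMul_apply (α : A) (x : I) : (rightMul I hI α x : A) = x * α := rfl

theorem rightMul_one : rightMul I hI 1 = LinearMap.id := by
  ext; simp

theorem rightMul_mul (α β : A) : rightMul I hI (α * β) = rightMul I hI β ∘ₗ rightMul I hI α := by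
  ext; simp [mul_assoc]

/-- Transposing `rightMul` reverses the order of composition, which turns this
antihomomorphism `A → End_F(I)` into a homomorphism. -/
def rightMulDual : A →ₐ[F] Module.End F (Dual F I) :=
  AlgHom.ofLinearMap (Dual.transpose ∘ₗ rightMul I hI)
    (by rw [LinearMap.comp_apply, rightMul_one]; rfl)
    (fun _ _ => by rw [LinearMap.comp_apply, rightMul_mul]; rfl)

end Submodule

theorem right_ideal_of_rank_n_splits_general
    (F : Type*) [Field F] (A : Type*) [Ring A] [Algebra F A]
    [FiniteDimensional F A] [IsSimpleRing A]
    (n : ℕ) (hdim : Module.finrank F A = n ^ 2)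
    (I : Submodule F A) (hI : ∀ x ∈ I, ∀ a : A, x * a ∈ I)
    (hIrank : Module.finrank F I = n) :
    (∃ e : A ≃ₐ[F] Module.End F (Module.Dual F I),
      ∀ (α : A) (f : Module.Dual F I) (x : I),
        e α f x = f ⟨(x : A) * α, hI x x.2 α⟩) ∧
    Nonempty (A ≃ₐ[F] Matrix (Fin n) (Fin n) F) := by
  have hdual : finrank F (Dual F I) = n := by rw [Subspace.dual_finrank_eq, hIrank]
  have hbij : Function.Bijective (I.rightMulDual hI) :=
    AlgHom.bijective_of_finrank_eq (B := Module.End F (Dual F I)) _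
      (by rw [finrank_linearMap, hdual, hdim, sq])
  let e := AlgEquiv.ofBijective (I.rightMulDual hI) hbij
  exact ⟨⟨e, fun _ _ _ => rfl⟩, ⟨e.trans (algEquivMatrix (finBasisOfFinrankEq F _ hdual))⟩⟩

/-- If a central simple algebra `A` of degree `n` over `F` (`dim_F A = n²`) has a
nonzero right ideal `I` with `dim_F I = n`, then `A` is split: the
right-multiplication map `R : A → End(I*)`, `R(α)(f) = f ∘ (right mult. by α)`,
is an `F`-algebra isomorphism, and `A ≅ Mₙ(F)`. -/
theorem right_ideal_of_rank_n_splits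
    (F : Type*) [Field F] (A : Type*) [Ring A] [Algebra F A]
    [FiniteDimensional F A] [Algebra.IsCentral F A] [IsSimpleRing A]
    (n : ℕ) (hn : 0 < n) (hdim : Module.finrank F A = n ^ 2)
    (I : Submodule F A) (hI : ∀ x ∈ I, ∀ a : A, x * a ∈ I)
    (hIbot : I ≠ ⊥) (hIrank : Module.finrank F I = n) :
    (∃ e : A ≃ₐ[F] Module.End F (Module.Dual F I),
      ∀ (α : A) (f : Module.Dual F I) (x : I),
        e α f x = f ⟨(x : A) * α, hI x x.2 α⟩) ∧
    Nonempty (A ≃ₐ[F] Matrix (Fin n) (Fin n) F) :=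
  right_ideal_of_rank_n_splits_general F A n hdim I hI hIrank
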